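/- arXiv:2002.03436 — 14 statements merged into one kernel-verified Lean document; each statement's English description precedes it below -/
import Mathlib

section
/- On a pseudo-Riemannian Hom-Lie algebra (g, [·,·], φ, ⟨·,·⟩) with φ invertible, the connection ∇ defined by Koszul's formula 2⟨∇_x y, φ(z)⟩ = ⟨[x,y], φ(z)⟩ + ⟨[z,y], φ(x)⟩ + ⟨[z,x], φ(y)⟩ is metric-compatible in the Hom sense: ⟨∇_x y, φ(z)⟩ = −⟨φ(y), ∇_x z⟩ for all x, y, z ∈ g. -/
theorem stmt3
    (V : Type*) [AddCommGroup V] [Module ℝ V]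
    (br : V →ₗ[ℝ] V →ₗ[ℝ] V) (φ : V →ₗ[ℝ] V)
    (hskew : ∀ x y : V, br x y = - br y x)
    (hmor : ∀ x y : V, φ (br x y) = br (φ x) (φ y))
    (hjac : ∀ x y z : V, br (φ x) (br y z) + br (φ y) (br z x) + br (φ z) (br x y) = 0)
    (g : V →ₗ[ℝ] V →ₗ[ℝ] ℝ)
    (hsym : ∀ x y : V, g x y = g y x)
    (hnd : ∀ x : V, (∀ y : V, g x y = (0:ℝ)) → x = 0)
    (hinvm : ∀ x y : V, g (φ x) (φ y) = g x y)
    (hφbij : Function.Bijective φ)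
    (D : V →ₗ[ℝ] V →ₗ[ℝ] V)
    (hK : ∀ x y z : V, 2 * g (D x y) (φ z) = g (br x y) (φ z) + g (br z y) (φ x) + g (br z x) (φ y))
    :
    ∀ x y z : V, g (D x y) (φ z) = - g (φ y) (D x z) := by
  intro x y z
  have h1 := hK x y z
  have h2 := hK x z y
  have e1 : g (br y x) (φ z) = - g (br x y) (φ z) := by rw [hskew y x]; simp
  have e2 : g (br y z) (φ x) = - g (br z y) (φ x) := by rw [hskew y z]; simp
  have e3 : g (br x z) (φ y) = - g (br z x) (φ y) := by rw [hskew x z]; simp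
  have hs : g (φ y) (D x z) = g (D x z) (φ y) := hsym _ _
  linarith
end

section
/- On a pseudo-Riemannian Hom-Lie algebra with φ invertible, a bilinear map ∇: g × g → g satisfying both ∇_x y − ∇_y x = [x,y] and ⟨∇_x y, φ(z)⟩ = −⟨φ(y), ∇_x z⟩ for all x,y,z is unique and coincides with the one given by Koszul's formula. -/
theorem stmt4
    (V : Type*) [AddCommGroup V] [Module ℝ V]
    (br : V →ₗ[ℝ] V →ₗ[ℝ] V) (φ : V →ₗ[ℝ] V)
    (hskew : ∀ x y : V, br x y = - br y x)
    (hmor : ∀ x y : V, φ (br x y) = br (φ x) (φ y))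
    (hjac : ∀ x y z : V, br (φ x) (br y z) + br (φ y) (br z x) + br (φ z) (br x y) = 0)
    (g : V →ₗ[ℝ] V →ₗ[ℝ] ℝ)
    (hsym : ∀ x y : V, g x y = g y x)
    (hnd : ∀ x : V, (∀ y : V, g x y = (0:ℝ)) → x = 0)
    (hinvm : ∀ x y : V, g (φ x) (φ y) = g x y)
    (hφbij : Function.Bijective φ)
    (D : V →ₗ[ℝ] V →ₗ[ℝ] V)
    (hDsym : ∀ x y : V, D x y - D y x = br x y)
    (hDmet : ∀ x y z : V, g (D x y) (φ z) = - g (φ y) (D x z))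
    :
    (∀ x y z : V, 2 * g (D x y) (φ z) = g (br x y) (φ z) + g (br z y) (φ x) + g (br z x) (φ y)) ∧
    (∀ D' : V →ₗ[ℝ] V →ₗ[ℝ] V,
      (∀ x y : V, D' x y - D' y x = br x y) →
      (∀ x y z : V, g (D' x y) (φ z) = - g (φ y) (D' x z)) →
      D' = D) := by
  have key : ∀ (E : V →ₗ[ℝ] V →ₗ[ℝ] V),
      (∀ x y : V, E x y - E y x = br x y) →
      (∀ x y z : V, g (E x y) (φ z) = - g (φ y) (E x z)) →
      ∀ x y z : V, 2 * g (E x y) (φ z)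
        = g (br x y) (φ z) + g (br z y) (φ x) + g (br z x) (φ y) := by
    intro E hs hm x y z
    have f1 : g (E x y) (φ z) - g (E y x) (φ z) = g (br x y) (φ z) := by
      rw [← hs x y]; simp [map_sub]
    have f2 : g (E y z) (φ x) - g (E z y) (φ x) = g (br y z) (φ x) := by
      rw [← hs y z]; simp [map_sub]
    have f3 : g (E z x) (φ y) - g (E x z) (φ y) = g (br z x) (φ y) := by
      rw [← hs z x]; simp [map_sub]
    have f4 := hm y x z
    have f5 := hm z y x
    have f6 := hm x z y
    have s4 := hsym (φ x) (E y z)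
    have s5 := hsym (φ y) (E z x)
    have s6 := hsym (φ z) (E x y)
    have f7 : g (br z y) (φ x) = - g (br y z) (φ x) := by
      rw [hskew z y]; simp
    linarith
  refine ⟨key D hDsym hDmet, ?_⟩
  intro D' hs hm
  ext x y
  have hz : ∀ z : V, g (D' x y) (φ z) = g (D x y) (φ z) := by
    intro z
    have h1 := key D hDsym hDmet x y z
    have h2 := key D' hs hm x y z
    linarith
  have : ∀ w : V, g (D' x y - D x y) w = 0 := by
    intro w
    obtain ⟨z, rfl⟩ := hφbij.2 w
    have := hz z
    simp [map_sub, this]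
  have h0 := hnd _ this
  have := sub_eq_zero.mp h0
  simpa using this
end

section
/- Let (g, [·,·], φ, J, ⟨·,·⟩) be an almost Norden Hom-Lie algebra and ∇ its Hom-Levi-Civita connection. Then ⟨φ(y), (∇_x(φ∘J))z⟩ = ⟨(∇_x(φ∘J))y, φ(z)⟩ for all x, y, z ∈ g, where (∇_x(φ∘J))y := ∇_x((φ∘J)y) − (φ∘J)(∇_x y). -/
theorem stmt6
    (V : Type*) [AddCommGroup V] [Module ℝ V]
    (br : V →ₗ[ℝ] V →ₗ[ℝ] V) (φ : V →ₗ[ℝ] V)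
    (hskew : ∀ x y : V, br x y = - br y x)
    (hmor : ∀ x y : V, φ (br x y) = br (φ x) (φ y))
    (hjac : ∀ x y z : V, br (φ x) (br y z) + br (φ y) (br z x) + br (φ z) (br x y) = 0)
    (g : V →ₗ[ℝ] V →ₗ[ℝ] ℝ)
    (hsym : ∀ x y : V, g x y = g y x)
    (hnd : ∀ x : V, (∀ y : V, g x y = (0:ℝ)) → x = 0)
    (hinvm : ∀ x y : V, g (φ x) (φ y) = g x y)
    (J : V ≃ₗ[ℝ] V)
    (hJ1 : ∀ x : V, φ (J (φ (J x))) = -x)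
    (hJ2 : ∀ x : V, φ (J x) = J (φ x))
    (hnor : ∀ x y : V, g (φ (J x)) y = g x (φ (J y)))
    (D : V →ₗ[ℝ] V →ₗ[ℝ] V)
    (hDsym : ∀ x y : V, D x y - D y x = br x y)
    (hDmet : ∀ x y z : V, g (D x y) (φ z) = - g (φ y) (D x z))
    :
    ∀ x y z : V,
      g (φ y) (D x (φ (J z)) - φ (J (D x z))) =
      g (D x (φ (J y)) - φ (J (D x y))) (φ z) := by
  intro x y z
  have e1 : g (φ y) (D x (φ (J z))) = - g (D x y) (φ (J (φ z))) := by
    rw [hsym, hDmet x (φ (J z)) y, hsym, hJ2 z]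
  have e2 : g (φ y) (φ (J (D x z))) = g (D x z) (φ (J (φ y))) := by
    rw [hsym, hnor]
  have e3 : g (D x (φ (J y))) (φ z) = - g (D x z) (φ (J (φ y))) := by
    rw [hDmet x (φ (J y)) z, hJ2 y, hsym]
  have e4 : g (φ (J (D x y))) (φ z) = g (D x y) (φ (J (φ z))) := by
    rw [hnor]
  simp only [map_sub, LinearMap.sub_apply, e1, e2, e3, e4]
  ring
end

section
/- If ∇ is a connection on a Hom-Lie algebra with ∇_x y − ∇_y x = [x,y] for all x,y, and ∇_x ∘ (φ∘J) = (φ∘J) ∘ ∇_x for all x (i.e. ∇(φ∘J)=0), then the Nijenhuis torsion N_{φ∘J} vanishes, i.e. [(φ∘J)x, (φ∘J)y] − (φ∘J)[(φ∘J)x, y] − (φ∘J)[x, (φ∘J)y] − [x,y] = 0 for all x, y. -/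
theorem stmt7
    (V : Type*) [AddCommGroup V] [Module ℝ V]
    (br : V →ₗ[ℝ] V →ₗ[ℝ] V) (φ : V →ₗ[ℝ] V)
    (hskew : ∀ x y : V, br x y = - br y x)
    (hmor : ∀ x y : V, φ (br x y) = br (φ x) (φ y))
    (hjac : ∀ x y z : V, br (φ x) (br y z) + br (φ y) (br z x) + br (φ z) (br x y) = 0)
    (J : V ≃ₗ[ℝ] V)
    (hJ1 : ∀ x : V, φ (J (φ (J x))) = -x)
    (hJ2 : ∀ x : V, φ (J x) = J (φ x))
    (D : V →ₗ[ℝ] V →ₗ[ℝ] V)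
    (hDsym : ∀ x y : V, D x y - D y x = br x y)
    (hKah : ∀ x y : V, D x (φ (J y)) = φ (J (D x y))) :
    ∀ x y : V,
      br (φ (J x)) (φ (J y)) - φ (J (br (φ (J x)) y)) - φ (J (br x (φ (J y)))) - br x y = 0 := by
  intro x y
  have h1 : br (φ (J x)) (φ (J y)) = φ (J (D (φ (J x)) y)) - φ (J (D (φ (J y)) x)) := by
    rw [← hDsym, hKah, hKah]
  have h2 : φ (J (br (φ (J x)) y)) = φ (J (D (φ (J x)) y)) + D y x := by
    rw [← hDsym, map_sub, map_sub, hKah, hJ1, sub_neg_eq_add]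
  have h3 : φ (J (br x (φ (J y)))) = -(D x y) - φ (J (D (φ (J y)) x)) := by
    rw [← hDsym, map_sub, map_sub, hKah, hJ1]
  rw [h1, h2, h3, ← hDsym]
  abel
end

section
/- An almost Norden Hom-Lie algebra (g, [·,·], φ, J, ⟨·,·⟩) with Hom-Levi-Civita connection ∇ is Kähler-Norden (i.e. ∇(φ∘J)=0) if and only if (∇_{(φ∘J)x}(φ∘J))y = −(φ∘J)((∇_x(φ∘J))y) for all x, y ∈ g. -/
theorem stmt8
    (V : Type*) [AddCommGroup V] [Module ℝ V]
    (br : V →ₗ[ℝ] V →ₗ[ℝ] V) (φ : V →ₗ[ℝ] V)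
    (hskew : ∀ x y : V, br x y = - br y x)
    (hmor : ∀ x y : V, φ (br x y) = br (φ x) (φ y))
    (hjac : ∀ x y z : V, br (φ x) (br y z) + br (φ y) (br z x) + br (φ z) (br x y) = 0)
    (g : V →ₗ[ℝ] V →ₗ[ℝ] ℝ)
    (hsym : ∀ x y : V, g x y = g y x)
    (hnd : ∀ x : V, (∀ y : V, g x y = (0:ℝ)) → x = 0)
    (hinvm : ∀ x y : V, g (φ x) (φ y) = g x y)
    (J : V ≃ₗ[ℝ] V)
    (hJ1 : ∀ x : V, φ (J (φ (J x))) = -x)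
    (hJ2 : ∀ x : V, φ (J x) = J (φ x))
    (hnor : ∀ x y : V, g (φ (J x)) y = g x (φ (J y)))
    (D : V →ₗ[ℝ] V →ₗ[ℝ] V)
    (hDsym : ∀ x y : V, D x y - D y x = br x y)
    (hDmet : ∀ x y z : V, g (D x y) (φ z) = - g (φ y) (D x z))
    :
    (∀ x y : V, D x (φ (J y)) = φ (J (D x y))) ↔
    (∀ x y : V,
      D (φ (J x)) (φ (J y)) - φ (J (D (φ (J x)) y)) =
      - φ (J (D x (φ (J y)) - φ (J (D x y))))) := by
  set K : V → V := fun v => φ (J v) with hKdef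
  have hKsub : ∀ a b : V, K (a - b) = K a - K b := by
    intro a b; simp [hKdef, map_sub]
  have hKneg : ∀ a : V, K (-a) = - K a := by
    intro a; simp [hKdef, map_neg]
  have hKK : ∀ a : V, K (K a) = -a := fun a => hJ1 a
  have hKadj : ∀ a b : V, g (K a) b = g a (K b) := fun a b => hnor a b
  have hKφ : ∀ a : V, K (φ a) = φ (K a) := by
    intro a
    show φ (J (φ a)) = φ (φ (J a))
    rw [hJ2 a]
  set T : V → V → V := fun x y => D x (K y) - K (D x y) with hTdef
  -- T(x, K y) = - K (T x y) always
  have hT2 : ∀ x y : V, T x (K y) = - K (T x y) := by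
    intro x y
    show D x (K (K y)) - K (D x (K y)) = -(K (D x (K y) - K (D x y)))
    rw [hKK, hKsub, hKK, map_neg]
    abel
  set S : V → V → V → ℝ := fun x y z => g (T x y) (φ z) with hSdef
  have hSval : ∀ x y z : V, S x y z = - g (φ (K y)) (D x z) - g (D x y) (φ (K z)) := by
    intro x y z
    show g (D x (K y) - K (D x y)) (φ z) = _
    rw [map_sub, LinearMap.sub_apply, hDmet x (K y) z, hKadj, hKφ]
  have hS23 : ∀ x y z : V, S x y z = S x z y := by
    intro x y z
    rw [hSval, hSval, hsym (φ (K y)) (D x z), hsym (D x y) (φ (K z))]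
    ring
  have hS2 : ∀ x y z : V, S x (K y) z = - S x y (K z) := by
    intro x y z
    show g (T x (K y)) (φ z) = - g (T x y) (φ (K z))
    rw [hT2, ← hKφ, ← hKadj]
    simp [hKdef, map_neg]
  constructor
  · intro h x y
    rw [h (φ (J x)) y, h x y]
    simp
  · intro h x y
    have hT1 : ∀ a b : V, T (K a) b = - K (T a b) := by
      intro a b
      exact h a b
    have hS1 : ∀ a b c : V, S (K a) b c = - S a b (K c) := by
      intro a b c
      show g (T (K a) b) (φ c) = - g (T a b) (φ (K c))
      rw [hT1, ← hKφ, ← hKadj]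
      simp [hKdef, map_neg]
    have hzero : ∀ a b c : V, S a b (K c) = 0 := by
      intro a b c
      have e1 : S a (K b) c = S a b (K c) := by
        have h1 : S a (K b) c = S (K a) b c := by rw [hS1, hS2]
        have h2 : S (K a) b c = S (K a) c b := hS23 _ _ _
        have h3 : S (K a) c b = - S a c (K b) := hS1 a c b
        have h4 : S a (K c) b = - S a c (K b) := hS2 a c b
        have h5 : S a (K c) b = S a b (K c) := hS23 a (K c) b
        linarith
      have e2 : S a (K b) c = - S a b (K c) := hS2 a b c
      linarith [e1, e2]
    have hSzero : ∀ a b c : V, S a b c = 0 := by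
      intro a b c
      have := hzero a b (-(K c))
      rwa [hKneg, hKK, neg_neg] at this
    have hTzero : T x y = 0 := by
      apply hnd
      intro w
      have h0 := hSzero x y (J (φ (J (-w))))
      simp only [hSdef] at h0
      rw [hJ1, neg_neg] at h0
      exact h0
    have := sub_eq_zero.mp hTzero
    exact this
end

section
/- Let (g,[·,·],φ,J,⟨·,·⟩) be an almost Norden Hom-Lie algebra with Hom-Levi-Civita connection ∇. If ∇_{(φ∘J)x} = −(φ∘J)∘∇_x for all x ∈ g and ∇(φ∘J)=0, then the complex structure J is abelian, i.e. [(φ∘J)x, (φ∘J)y] = [x,y] for all x, y. -/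
theorem stmt9
    (V : Type*) [AddCommGroup V] [Module ℝ V]
    (br : V →ₗ[ℝ] V →ₗ[ℝ] V) (φ : V →ₗ[ℝ] V)
    (hskew : ∀ x y : V, br x y = - br y x)
    (hmor : ∀ x y : V, φ (br x y) = br (φ x) (φ y))
    (hjac : ∀ x y z : V, br (φ x) (br y z) + br (φ y) (br z x) + br (φ z) (br x y) = 0)
    (g : V →ₗ[ℝ] V →ₗ[ℝ] ℝ)
    (hsym : ∀ x y : V, g x y = g y x)
    (hnd : ∀ x : V, (∀ y : V, g x y = (0:ℝ)) → x = 0)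
    (hinvm : ∀ x y : V, g (φ x) (φ y) = g x y)
    (J : V ≃ₗ[ℝ] V)
    (hJ1 : ∀ x : V, φ (J (φ (J x))) = -x)
    (hJ2 : ∀ x : V, φ (J x) = J (φ x))
    (hnor : ∀ x y : V, g (φ (J x)) y = g x (φ (J y)))
    (D : V →ₗ[ℝ] V →ₗ[ℝ] V)
    (hDsym : ∀ x y : V, D x y - D y x = br x y)
    (hDmet : ∀ x y z : V, g (D x y) (φ z) = - g (φ y) (D x z))
    (hanti : ∀ x y : V, D (φ (J x)) y = - φ (J (D x y)))
    (hKah : ∀ x y : V, D x (φ (J y)) = φ (J (D x y))) :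
    ∀ x y : V, br (φ (J x)) (φ (J y)) = br x y := by
  intro x y
  have h1 : ∀ a b : V, D (φ (J a)) (φ (J b)) = D a b := fun a b => by
    rw [hanti, hKah, hJ1, neg_neg]
  rw [← hDsym, ← hDsym x y, h1, h1]
end

section
/- Let (g,[·,·],φ,J,⟨·,·⟩) be a Kähler-Norden Hom-Lie algebra (∇(φ∘J)=0 for the Hom-Levi-Civita connection ∇). If J is abelian ([(φ∘J)x,(φ∘J)y]=[x,y]), then ∇_{(φ∘J)x} y = −(φ∘J)(∇_x y) for all x, y ∈ g. -/
theorem stmt10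
    (V : Type*) [AddCommGroup V] [Module ℝ V]
    (br : V →ₗ[ℝ] V →ₗ[ℝ] V) (φ : V →ₗ[ℝ] V)
    (hskew : ∀ x y : V, br x y = - br y x)
    (hmor : ∀ x y : V, φ (br x y) = br (φ x) (φ y))
    (hjac : ∀ x y z : V, br (φ x) (br y z) + br (φ y) (br z x) + br (φ z) (br x y) = 0)
    (g : V →ₗ[ℝ] V →ₗ[ℝ] ℝ)
    (hsym : ∀ x y : V, g x y = g y x)
    (hnd : ∀ x : V, (∀ y : V, g x y = (0:ℝ)) → x = 0)
    (hinvm : ∀ x y : V, g (φ x) (φ y) = g x y)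
    (J : V ≃ₗ[ℝ] V)
    (hJ1 : ∀ x : V, φ (J (φ (J x))) = -x)
    (hJ2 : ∀ x : V, φ (J x) = J (φ x))
    (hnor : ∀ x y : V, g (φ (J x)) y = g x (φ (J y)))
    (D : V →ₗ[ℝ] V →ₗ[ℝ] V)
    (hDsym : ∀ x y : V, D x y - D y x = br x y)
    (hDmet : ∀ x y z : V, g (D x y) (φ z) = - g (φ y) (D x z))
    (hKah : ∀ x y : V, D x (φ (J y)) = φ (J (D x y)))
    (hab : ∀ x y : V, br (φ (J x)) (φ (J y)) = br x y) :
    ∀ x y : V, D (φ (J x)) y = - φ (J (D x y)) := by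
  -- basic helper facts
  have hbrK : ∀ a b : V, br (φ (J a)) b = - br a (φ (J b)) := by
    intro a b
    have h := hab a (φ (J b))
    rw [hJ1 b] at h
    rw [map_neg] at h
    exact neg_eq_iff_eq_neg.mp h
  have hKphi : ∀ v : V, φ (J (φ v)) = φ (φ (J v)) := by
    intro v; rw [hJ2 v]
  have hgK : ∀ a b : V, g (φ (J a)) b = g a (φ (J b)) := hnor
  -- Koszul formula
  have kos : ∀ a b c : V, 2 * g (D a b) (φ c)
      = g (br a b) (φ c) - g (φ a) (br b c) - g (φ b) (br a c) := by
    intro a b c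
    have s1 := congrArg (fun v => g v (φ c)) (hDsym a b)
    simp only [map_sub, LinearMap.sub_apply] at s1
    have s2 := hDmet b a c
    have s3 := congrArg (fun v => g (φ a) v) (hDsym b c)
    simp only [map_sub] at s3
    have s4 : g (φ a) (D c b) = g (D c b) (φ a) := hsym _ _
    have s5 := hDmet c b a
    have s6 := congrArg (fun v => g (φ b) v) (hDsym c a)
    simp only [map_sub] at s6
    have s7 := hDmet a b c
    rw [hskew c a] at s6
    simp only [map_neg] at s6
    linarith
  -- key identity from Kaehler condition
  have key : ∀ a b c : V, g (br a (φ (J b))) (φ c)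
      = g (br a b) (φ (φ (J c))) - 2 * g (φ a) (br b (φ (J c)))
        - g (φ b) (br a (φ (J c))) + g (φ (φ (J b))) (br a c) := by
    intro a b c
    have h1 : g (D a (φ (J b))) (φ c) = g (D a b) (φ (φ (J c))) := by
      rw [hKah a b, hgK, hKphi]
    have k1 := kos a (φ (J b)) c
    have k2 := kos a b (φ (J c))
    rw [hbrK b c] at k1
    simp only [map_neg] at k1
    linarith
  intro x y
  -- the crucial scalar identity
  have final : ∀ z : V, g (br x (φ (J y))) (φ z) + g (φ x) (br y (φ (J z)))
      + g (φ y) (br x (φ (J z))) = 0 := by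
    intro z
    have k1 := key x y z
    have k2 := key (φ (J x)) y (φ (J z))
    have k3 := key y x z
    rw [hJ1 z] at k2
    simp only [map_neg] at k2
    rw [hab x y, hab x z, hbrK x y, hbrK x z] at k2
    simp only [map_neg, LinearMap.neg_apply, neg_neg] at k2
    have hyx : br y (φ (J x)) = br x (φ (J y)) := by
      rw [hskew y (φ (J x)), hbrK x y, neg_neg]
    rw [hyx, hskew y x] at k3
    simp only [map_neg, LinearMap.neg_apply] at k3
    linarith
  -- vector identity from non-degeneracy
  have hW : φ (J (br x y)) + br x (φ (J y)) - (φ (J (D x y)) + φ (J (D x y))) = 0 := by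
    apply hnd
    intro u
    obtain ⟨z, hz⟩ : ∃ z : V, φ z = u :=
      ⟨-(J (φ (J u))), by rw [map_neg, hJ1, neg_neg]⟩
    subst hz
    simp only [map_add, map_sub, LinearMap.add_apply, LinearMap.sub_apply]
    rw [hgK (br x y), hgK (D x y), hKphi]
    have k := kos x y (φ (J z))
    have f := final z
    linarith
  -- step 1: express D (Kx) y
  have h2' : D y x = D x y - br x y := by rw [← hDsym x y]; abel
  have h := hDsym (φ (J x)) y
  rw [hKah y x, h2', map_sub, map_sub, hbrK x y, sub_eq_iff_eq_add] at h
  rw [h]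
  have hW' : φ (J (br x y)) + br x (φ (J y)) = φ (J (D x y)) + φ (J (D x y)) := by
    rwa [sub_eq_zero] at hW
  have : br x (φ (J y)) = φ (J (D x y)) + φ (J (D x y)) - φ (J (br x y)) := by
    rw [← hW']; abel
  rw [this]; abel
end

section
/- Let (g,[·,·],φ,J,⟨·,·⟩) be a Kähler-Norden Hom-Lie algebra whose complex structure J is abelian. Then the Hom-Levi-Civita connection is given explicitly by 2∇_x y = [x,y] − (φ∘J)[x, (φ∘J)y] for all x, y ∈ g. -/
theorem stmt11
    (V : Type*) [AddCommGroup V] [Module ℝ V]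
    (br : V →ₗ[ℝ] V →ₗ[ℝ] V) (φ : V →ₗ[ℝ] V)
    (hskew : ∀ x y : V, br x y = - br y x)
    (hmor : ∀ x y : V, φ (br x y) = br (φ x) (φ y))
    (hjac : ∀ x y z : V, br (φ x) (br y z) + br (φ y) (br z x) + br (φ z) (br x y) = 0)
    (g : V →ₗ[ℝ] V →ₗ[ℝ] ℝ)
    (hsym : ∀ x y : V, g x y = g y x)
    (hnd : ∀ x : V, (∀ y : V, g x y = (0:ℝ)) → x = 0)
    (hinvm : ∀ x y : V, g (φ x) (φ y) = g x y)
    (J : V ≃ₗ[ℝ] V)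
    (hJ1 : ∀ x : V, φ (J (φ (J x))) = -x)
    (hJ2 : ∀ x : V, φ (J x) = J (φ x))
    (hnor : ∀ x y : V, g (φ (J x)) y = g x (φ (J y)))
    (D : V →ₗ[ℝ] V →ₗ[ℝ] V)
    (hDsym : ∀ x y : V, D x y - D y x = br x y)
    (hDmet : ∀ x y z : V, g (D x y) (φ z) = - g (φ y) (D x z))
    (hKah : ∀ x y : V, D x (φ (J y)) = φ (J (D x y)))
    (hab : ∀ x y : V, br (φ (J x)) (φ (J y)) = br x y) :
    ∀ x y : V, 2 • D x y = br x y - φ (J (br x (φ (J y)))) := by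
  -- φ ∘ φ ∘ J = φ ∘ J ∘ φ
  have hcomm : ∀ a : V, φ (φ (J a)) = φ (J (φ a)) := fun a => congrArg φ (hJ2 a)
  -- the Norden-metric relation for K = φ∘J applied twice through φ
  have m1 : ∀ v w : V, g (φ (φ (J v))) w = g (φ v) (φ (J w)) := by
    intro v w
    rw [hcomm v, hnor (φ v) w]
  -- [a, Kb] = -[Ka, b]
  have hL4 : ∀ a b : V, br a (φ (J b)) = - br (φ (J a)) b := by
    intro a b
    have h := hab a (φ (J b))
    rw [hJ1 b, map_neg] at h
    exact h.symm
  -- [a, Kb] = [b, Ka]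
  have hsymK : ∀ a b : V, br a (φ (J b)) = br b (φ (J a)) := by
    intro a b
    rw [hL4 a b]
    exact (hskew b (φ (J a))).symm
  -- Koszul formula
  have koszul : ∀ a b c : V,
      2 * g (D a b) (φ c) = g (br a b) (φ c) + g (φ a) (br c b) - g (φ b) (br a c) := by
    intro a b c
    have e1 : g (D a b) (φ c) = - g (φ b) (D a c) := hDmet a b c
    have h2 : D a c = br a c + D c a := by rw [← hDsym a c]; abel
    have e2 : g (φ b) (D a c) = g (φ b) (br a c) + g (φ b) (D c a) := by rw [h2, map_add]
    have e3 : g (D c a) (φ b) = - g (φ a) (D c b) := hDmet c a b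
    have e3s : g (φ b) (D c a) = g (D c a) (φ b) := hsym _ _
    have h4 : D c b = br c b + D b c := by rw [← hDsym c b]; abel
    have e4 : g (φ a) (D c b) = g (φ a) (br c b) + g (φ a) (D b c) := by rw [h4, map_add]
    have e5 : g (D b a) (φ c) = - g (φ a) (D b c) := hDmet b a c
    have h6 : D b a = D a b - br a b := by rw [← hDsym a b]; abel
    have e6 : g (D b a) (φ c) = g (D a b) (φ c) - g (br a b) (φ c) := by
      rw [h6, map_sub, LinearMap.sub_apply]
    linarith
  -- Kähler-Koszul raw identity
  have raw : ∀ a b c : V,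
      g (br a (φ (J b))) (φ c) + g (φ a) (br c (φ (J b))) - g (φ (φ (J b))) (br a c)
      = g (br a b) (φ (φ (J c))) + g (φ a) (br (φ (J c)) b) - g (φ b) (br a (φ (J c))) := by
    intro a b c
    have e := congrArg (fun v => g v (φ c)) (hKah a b)
    rw [hnor (D a b) (φ c), ← hcomm c] at e
    have k1 := koszul a (φ (J b)) c
    have k2 := koszul a b (φ (J c))
    linarith
  -- the key cyclic identity
  have star : ∀ a b c : V,
      g (φ c) (br a (φ (J b))) + g (φ a) (br c (φ (J b))) + g (φ b) (br a (φ (J c))) = 0 := by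
    intro a b c
    have r1 := raw a b c
    have r2 := raw c b a
    have r3 := raw b a c
    have q1 : g (br a (φ (J b))) (φ c) = g (φ c) (br a (φ (J b))) := hsym _ _
    have q2 : g (φ (φ (J b))) (br a c) = g (φ b) (φ (J (br a c))) := m1 b _
    have q3 : g (br a b) (φ (φ (J c))) = g (φ c) (φ (J (br a b))) := by
      rw [hsym (br a b) (φ (φ (J c))), m1 c (br a b)]
    have q4 : g (φ a) (br (φ (J c)) b) = - g (φ a) (br c (φ (J b))) := by
      rw [show br (φ (J c)) b = - br c (φ (J b)) from by rw [hL4 c b, neg_neg], map_neg]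
    have q5 : g (br c (φ (J b))) (φ a) = g (φ a) (br c (φ (J b))) := hsym _ _
    have q6 : g (φ (φ (J b))) (br c a) = - g (φ b) (φ (J (br a c))) := by
      rw [m1 b (br c a), show br c a = - br a c from hskew c a, map_neg, map_neg, map_neg]
    have q7 : g (br c b) (φ (φ (J a))) = g (φ a) (φ (J (br c b))) := by
      rw [hsym (br c b) (φ (φ (J a))), m1 a (br c b)]
    have q8 : g (φ c) (br (φ (J a)) b) = - g (φ c) (br a (φ (J b))) := by
      rw [show br (φ (J a)) b = - br a (φ (J b)) from by rw [hL4 a b, neg_neg], map_neg]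
    have q9 : g (φ b) (br c (φ (J a))) = g (φ b) (br a (φ (J c))) := by
      rw [hsymK c a]
    have q10 : g (br b (φ (J a))) (φ c) = g (φ c) (br a (φ (J b))) := by
      rw [hsymK b a]; exact hsym _ _
    have q11 : g (φ (φ (J a))) (br b c) = - g (φ a) (φ (J (br c b))) := by
      rw [m1 a (br b c), show br b c = - br c b from hskew b c, map_neg, map_neg, map_neg]
    have q12 : g (br b a) (φ (φ (J c))) = - g (φ c) (φ (J (br a b))) := by
      rw [show br b a = - br a b from hskew b a, map_neg, LinearMap.neg_apply,
        hsym (br a b) (φ (φ (J c))), m1 c (br a b)]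
    have q13 : g (φ b) (br (φ (J c)) a) = - g (φ b) (br a (φ (J c))) := by
      rw [show br (φ (J c)) a = - br c (φ (J a)) from by rw [hL4 c a, neg_neg], map_neg,
        hsymK c a]
    have q14 : g (φ a) (br b (φ (J c))) = g (φ a) (br c (φ (J b))) := by
      rw [hsymK b c]
    linarith
  intro x y
  -- key pointwise identity against φ c
  have key : ∀ c : V, 2 * g (D x y) (φ c)
      = g (br x y - φ (J (br x (φ (J y))))) (φ c) := by
    intro c
    have ks := koszul x y c
    have st := star x y (φ (J c))
    have w1 : g (φ (φ (J c))) (br x (φ (J y))) = g (br x (φ (J y))) (φ (φ (J c))) :=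
      hsym _ _
    have w2 : g (φ x) (br (φ (J c)) (φ (J y))) = g (φ x) (br c y) := by rw [hab c y]
    have w3 : g (φ y) (br x (φ (J (φ (J c))))) = - g (φ y) (br x c) := by
      rw [hJ1 c, map_neg, map_neg]
    have v1 : g (φ (J (br x (φ (J y))))) (φ c) = g (br x (φ (J y))) (φ (φ (J c))) := by
      rw [hnor (br x (φ (J y))) (φ c), ← hcomm c]
    have v2 : g (br x y - φ (J (br x (φ (J y))))) (φ c)
        = g (br x y) (φ c) - g (φ (J (br x (φ (J y))))) (φ c) := by
      rw [map_sub, LinearMap.sub_apply]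
    linarith
  -- φ is surjective
  have hsurj : ∀ w : V, ∃ c : V, φ c = w := by
    intro w
    refine ⟨-φ (J (J w)), ?_⟩
    rw [map_neg, hcomm (J w), hJ1 w, neg_neg]
  have hz : ∀ w : V, g (2 • D x y - (br x y - φ (J (br x (φ (J y)))))) w = 0 := by
    intro w
    obtain ⟨c, rfl⟩ := hsurj w
    have hk := key c
    have h2 : g (2 • D x y - (br x y - φ (J (br x (φ (J y)))))) (φ c)
        = 2 * g (D x y) (φ c) - g (br x y - φ (J (br x (φ (J y))))) (φ c) := by
      rw [map_sub, LinearMap.sub_apply, two_smul, map_add, LinearMap.add_apply]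
      ring
    rw [h2, hk, sub_self]
  have h0 := hnd _ hz
  exact sub_eq_zero.mp h0
end

section
/- In an almost Norden Hom-Lie algebra (g,[·,·],φ,J,⟨·,·⟩) with Hom-Levi-Civita connection ∇, the Tachibana operator satisfies (Φ_{φ∘J}⟨·,·⟩)(x,y,z) = ⟨(∇_y(φ∘J))x, φ(z)⟩ + ⟨φ(y), (∇_z(φ∘J))x⟩ − ⟨(∇_x(φ∘J))y, φ(z)⟩ for all x,y,z ∈ g. -/
theorem stmt12
    (V : Type*) [AddCommGroup V] [Module ℝ V]
    (br : V →ₗ[ℝ] V →ₗ[ℝ] V) (φ : V →ₗ[ℝ] V)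
    (hskew : ∀ x y : V, br x y = - br y x)
    (hmor : ∀ x y : V, φ (br x y) = br (φ x) (φ y))
    (hjac : ∀ x y z : V, br (φ x) (br y z) + br (φ y) (br z x) + br (φ z) (br x y) = 0)
    (g : V →ₗ[ℝ] V →ₗ[ℝ] ℝ)
    (hsym : ∀ x y : V, g x y = g y x)
    (hnd : ∀ x : V, (∀ y : V, g x y = (0:ℝ)) → x = 0)
    (hinvm : ∀ x y : V, g (φ x) (φ y) = g x y)
    (J : V ≃ₗ[ℝ] V)
    (hJ1 : ∀ x : V, φ (J (φ (J x))) = -x)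
    (hJ2 : ∀ x : V, φ (J x) = J (φ x))
    (hnor : ∀ x y : V, g (φ (J x)) y = g x (φ (J y)))
    (D : V →ₗ[ℝ] V →ₗ[ℝ] V)
    (hDsym : ∀ x y : V, D x y - D y x = br x y)
    (hDmet : ∀ x y z : V, g (D x y) (φ z) = - g (φ y) (D x z))
    :
    ∀ x y z : V,
      g (br y (φ (J x)) - φ (J (br y x))) (φ z) + g (φ y) (br z (φ (J x)) - φ (J (br z x))) =
      g (D y (φ (J x)) - φ (J (D y x))) (φ z) + g (φ y) (D z (φ (J x)) - φ (J (D z x)))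
        - g (D x (φ (J y)) - φ (J (D x y))) (φ z) := by
  intro x y z
  have h1 := hDmet (φ (J x)) y z
  have h2 : g (φ y) (φ (J (D x z))) = - g (D x (φ (J y))) (φ z) := by
    have hn := hnor (φ y) (D x z)
    have hφ : φ (J (φ y)) = φ (φ (J y)) := by
      rw [hJ2 y, hJ2 (φ y)]
    have hm := hDmet x (φ (J y)) z
    have hg : g (φ (φ (J y))) (D x z) = g (φ (J (φ y))) (D x z) := by rw [hφ]
    linarith
  rw [← hDsym y (φ (J x)), ← hDsym y x, ← hDsym z (φ (J x)), ← hDsym z x]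
  simp only [map_sub, LinearMap.sub_apply, LinearMap.map_sub]
  linarith
end

section
/- In an almost Norden Hom-Lie algebra with Hom-Levi-Civita connection ∇, one has (Φ_{φ∘J}⟨·,·⟩)(x,y,z) + (Φ_{φ∘J}⟨·,·⟩)(z,y,x) = 2⟨(∇_y(φ∘J))x, φ(z)⟩ for all x, y, z ∈ g. -/
theorem stmt13
    (V : Type*) [AddCommGroup V] [Module ℝ V]
    (br : V →ₗ[ℝ] V →ₗ[ℝ] V) (φ : V →ₗ[ℝ] V)
    (hskew : ∀ x y : V, br x y = - br y x)
    (hmor : ∀ x y : V, φ (br x y) = br (φ x) (φ y))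
    (hjac : ∀ x y z : V, br (φ x) (br y z) + br (φ y) (br z x) + br (φ z) (br x y) = 0)
    (g : V →ₗ[ℝ] V →ₗ[ℝ] ℝ)
    (hsym : ∀ x y : V, g x y = g y x)
    (hnd : ∀ x : V, (∀ y : V, g x y = (0:ℝ)) → x = 0)
    (hinvm : ∀ x y : V, g (φ x) (φ y) = g x y)
    (J : V ≃ₗ[ℝ] V)
    (hJ1 : ∀ x : V, φ (J (φ (J x))) = -x)
    (hJ2 : ∀ x : V, φ (J x) = J (φ x))
    (hnor : ∀ x y : V, g (φ (J x)) y = g x (φ (J y)))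
    (D : V →ₗ[ℝ] V →ₗ[ℝ] V)
    (hDsym : ∀ x y : V, D x y - D y x = br x y)
    (hDmet : ∀ x y z : V, g (D x y) (φ z) = - g (φ y) (D x z))
    :
    ∀ x y z : V,
      (g (br y (φ (J x)) - φ (J (br y x))) (φ z) + g (φ y) (br z (φ (J x)) - φ (J (br z x)))) +
      (g (br y (φ (J z)) - φ (J (br y z))) (φ x) + g (φ y) (br x (φ (J z)) - φ (J (br x z)))) =
      2 * g (D y (φ (J x)) - φ (J (D y x))) (φ z) := by
  -- φ commutes with φ∘J in the pairing:
  have haux : ∀ a b : V, g (φ (φ (J a))) b = g (φ (J b)) (φ a) := by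
    intro a b
    have h1 : φ (φ (J a)) = φ (J (φ a)) := by rw [hJ2 a]
    rw [h1, hnor]; exact hsym _ _
  have key1 : ∀ a b c : V, g (φ b) (D a (φ (J c))) = - g (φ (J (D a b))) (φ c) := by
    intro a b c
    rw [hsym, hDmet, haux]
  have key2 : ∀ a b c : V, g (D a (φ (J b))) (φ c) = - g (φ (J (D a c))) (φ b) := by
    intro a b c
    rw [hsym (D a (φ (J b))) (φ c), key1]
  intro x y z
  have hbr : ∀ a b : V, br a b = D a b - D b a := fun a b => (hDsym a b).symm
  simp only [hbr, map_sub, LinearMap.sub_apply]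
  have E1 := key1 z y x
  have E2 := key1 x y z
  have E3 := hDmet (φ (J x)) y z
  have E4 := hDmet (φ (J z)) y x
  have E5 := key2 y z x
  have E6 := key2 y x z
  linear_combination E1 + E2 - E3 - E4 + E5 - E6
end

section
/- An almost Norden Hom-Lie algebra (g,[·,·],φ,J,⟨·,·⟩) satisfies Φ_{φ∘J}⟨·,·⟩ = 0 (holomorphic) if and only if ∇(φ∘J) = 0 for its Hom-Levi-Civita connection ∇, i.e. Kähler-Norden and holomorphic Norden are equivalent. -/
theorem stmt14
    (V : Type*) [AddCommGroup V] [Module ℝ V]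
    (br : V →ₗ[ℝ] V →ₗ[ℝ] V) (φ : V →ₗ[ℝ] V)
    (hskew : ∀ x y : V, br x y = - br y x)
    (hmor : ∀ x y : V, φ (br x y) = br (φ x) (φ y))
    (hjac : ∀ x y z : V, br (φ x) (br y z) + br (φ y) (br z x) + br (φ z) (br x y) = 0)
    (g : V →ₗ[ℝ] V →ₗ[ℝ] ℝ)
    (hsym : ∀ x y : V, g x y = g y x)
    (hnd : ∀ x : V, (∀ y : V, g x y = (0:ℝ)) → x = 0)
    (hinvm : ∀ x y : V, g (φ x) (φ y) = g x y)
    (J : V ≃ₗ[ℝ] V)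
    (hJ1 : ∀ x : V, φ (J (φ (J x))) = -x)
    (hJ2 : ∀ x : V, φ (J x) = J (φ x))
    (hnor : ∀ x y : V, g (φ (J x)) y = g x (φ (J y)))
    (D : V →ₗ[ℝ] V →ₗ[ℝ] V)
    (hDsym : ∀ x y : V, D x y - D y x = br x y)
    (hDmet : ∀ x y z : V, g (D x y) (φ z) = - g (φ y) (D x z))
    :
    (∀ x y z : V, g (br y (φ (J x)) - φ (J (br y x))) (φ z) + g (φ y) (br z (φ (J x)) - φ (J (br z x))) = 0) ↔
    (∀ x y : V, D x (φ (J y)) = φ (J (D x y))) := by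
  have Kcomm : ∀ x : V, φ (J (φ x)) = φ (φ (J x)) := fun x => by simp only [hJ2]
  have φsurj : ∀ w : V, ∃ u : V, φ u = w := by
    intro w
    refine ⟨-(J (φ (J w))), ?_⟩
    rw [map_neg, hJ1, neg_neg]
  have e1 : ∀ x y z : V, g (φ (J (D x y))) (φ z) = - g (φ y) (D x (φ (J z))) := by
    intro x y z
    rw [hnor, Kcomm, hDmet]
  have e2 : ∀ x y z : V, g (D x (φ (J y))) (φ z) = - g (φ y) (φ (J (D x z))) := by
    intro x y z
    rw [hDmet, ← Kcomm, hnor]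
  have L2 : ∀ x y z : V,
      g (D x (φ (J y)) - φ (J (D x y))) (φ z)
        = g (φ y) (D x (φ (J z)) - φ (J (D x z))) := by
    intro x y z
    have h1 := e1 x y z
    have h2 := e2 x y z
    simp only [map_sub, LinearMap.sub_apply]
    linarith
  have msym : ∀ x y z : V,
      g (D x (φ (J y)) - φ (J (D x y))) (φ z)
        = g (D x (φ (J z)) - φ (J (D x z))) (φ y) := by
    intro x y z
    rw [L2, hsym]
  have Tkey : ∀ x y z : V,
      g (br y (φ (J x)) - φ (J (br y x))) (φ z) + g (φ y) (br z (φ (J x)) - φ (J (br z x)))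
        = g (D y (φ (J x)) - φ (J (D y x))) (φ z)
          - g (D x (φ (J y)) - φ (J (D x y))) (φ z)
          + g (D z (φ (J y)) - φ (J (D z y))) (φ x) := by
    intro x y z
    have b1 : br y (φ (J x)) = D y (φ (J x)) - D (φ (J x)) y := (hDsym _ _).symm
    have b2 : br z (φ (J x)) = D z (φ (J x)) - D (φ (J x)) z := (hDsym _ _).symm
    have b3 : φ (J (br y x)) = φ (J (D y x)) - φ (J (D x y)) := by
      rw [← hDsym, map_sub, map_sub]
    have b4 : φ (J (br z x)) = φ (J (D z x)) - φ (J (D x z)) := by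
      rw [← hDsym, map_sub, map_sub]
    have c1 := hDmet (φ (J x)) y z
    have c2 := e1 x y z
    have c3 := L2 x y z
    have c4 := L2 z y x
    rw [b1, b2, b3, b4]
    simp only [map_sub, LinearMap.sub_apply] at c3 c4 ⊢
    linarith
  constructor
  · intro h x y
    have H : ∀ x y z : V,
        g (D y (φ (J x)) - φ (J (D y x))) (φ z)
          - g (D x (φ (J y)) - φ (J (D x y))) (φ z)
          + g (D z (φ (J y)) - φ (J (D z y))) (φ x) = 0 := by
      intro x y z
      rw [← Tkey x y z]; exact h x y z
    have hm0 : ∀ a b c : V, g (D a (φ (J b)) - φ (J (D a b))) (φ c) = 0 := by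
      intro a b c
      have H1 := H b c a
      have H2 := H c b a
      have hs := msym a b c
      linarith
    have hz : ∀ w : V, g (D x (φ (J y)) - φ (J (D x y))) w = 0 := by
      intro w
      obtain ⟨u, hu⟩ := φsurj w
      rw [← hu]; exact hm0 x y u
    exact sub_eq_zero.mp (hnd _ hz)
  · intro h x y z
    rw [Tkey]
    rw [sub_eq_zero.mpr (h y x), sub_eq_zero.mpr (h x y), sub_eq_zero.mpr (h z y)]
    simp
end

section
/- Let (g,[·,·],φ,J,⟨·,·⟩) be a Kähler-Norden Hom-Lie algebra with Hom-Levi-Civita connection ∇. If J is abelian, then ∇_{φ(x)}(∇_y z) = ∇_{φ(y)}(∇_x z) for all x, y, z ∈ g. -/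
theorem stmt16
    (V : Type*) [AddCommGroup V] [Module ℝ V]
    (br : V →ₗ[ℝ] V →ₗ[ℝ] V) (φ : V →ₗ[ℝ] V)
    (hskew : ∀ x y : V, br x y = - br y x)
    (hmor : ∀ x y : V, φ (br x y) = br (φ x) (φ y))
    (hjac : ∀ x y z : V, br (φ x) (br y z) + br (φ y) (br z x) + br (φ z) (br x y) = 0)
    (g : V →ₗ[ℝ] V →ₗ[ℝ] ℝ)
    (hsym : ∀ x y : V, g x y = g y x)
    (hnd : ∀ x : V, (∀ y : V, g x y = (0:ℝ)) → x = 0)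
    (hinvm : ∀ x y : V, g (φ x) (φ y) = g x y)
    (J : V ≃ₗ[ℝ] V)
    (hJ1 : ∀ x : V, φ (J (φ (J x))) = -x)
    (hJ2 : ∀ x : V, φ (J x) = J (φ x))
    (hnor : ∀ x y : V, g (φ (J x)) y = g x (φ (J y)))
    (D : V →ₗ[ℝ] V →ₗ[ℝ] V)
    (hDsym : ∀ x y : V, D x y - D y x = br x y)
    (hDmet : ∀ x y z : V, g (D x y) (φ z) = - g (φ y) (D x z))
    (hKah : ∀ x y : V, D x (φ (J y)) = φ (J (D x y)))
    (hab : ∀ x y : V, br (φ (J x)) (φ (J y)) = br x y)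
    (hcomm : ∀ x : V, φ (J (φ x)) = φ (φ (J x))) :
    ∀ x y z : V, D (φ x) (D y z) = D (φ y) (D x z) := by
  -- abbreviation: K v := φ (J v) (the almost complex structure composed with φ)
  -- basic facts
  have hsurj : ∀ v : V, ∃ w : V, φ w = v := by
    intro v
    exact ⟨-(J (φ (J v))), by rw [map_neg, hJ1, neg_neg]⟩
  have hnd' : ∀ w : V, (∀ c : V, g w (φ c) = 0) → w = 0 := by
    intro w h
    refine hnd w (fun y => ?_)
    obtain ⟨c, hc⟩ := hsurj y
    rw [← hc]; exact h c
  -- abelian rule: br (K a) b = - br a (K b)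
  have habK : ∀ a b : V, br (φ (J a)) b = - br a (φ (J b)) := by
    intro a b
    have h := hab a (φ (J b))
    rw [hJ1 b, map_neg] at h
    exact neg_eq_iff_eq_neg.mp h
  -- metric antisymmetry of D in last two slots
  have hSalt : ∀ a b c : V, g (D a b) (φ c) = - g (D a c) (φ b) := by
    intro a b c
    rw [hDmet, hsym]
  -- symmetry of P a b := D (K a) b + K (D a b)
  have Psym : ∀ a b : V,
      D (φ (J a)) b + φ (J (D a b)) = D (φ (J b)) a + φ (J (D b a)) := by
    intro a b
    have t1 := hDsym (φ (J a)) b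
    have t2 := hDsym (φ (J b)) a
    have t3 := hKah b a
    have t4 := hKah a b
    have t5 : br (φ (J a)) b = br (φ (J b)) a := by
      rw [habK a b, hskew a (φ (J b)), neg_neg]
    linear_combination (norm := module) t1 - t2 + t5 + t3 - t4
  -- W a b c := g (P a b) (φ c) is antisymmetric in (b,c)
  have anti : ∀ a b c : V,
      g (D (φ (J a)) b + φ (J (D a b))) (φ c)
        = - g (D (φ (J a)) c + φ (J (D a c))) (φ b) := by
    intro a b c
    have h1 := hSalt (φ (J a)) b c
    have h2 : g (φ (J (D a b))) (φ c) = - g (φ (J (D a c))) (φ b) := by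
      rw [hnor (D a b) (φ c), hcomm c, hSalt a b (φ (J c)), hKah a c]
    simp only [map_add, LinearMap.add_apply]
    linarith
  have sym : ∀ a b c : V,
      g (D (φ (J a)) b + φ (J (D a b))) (φ c)
        = g (D (φ (J b)) a + φ (J (D b a))) (φ c) := by
    intro a b c
    rw [Psym a b]
  have Wzero : ∀ a b c : V,
      g (D (φ (J a)) b + φ (J (D a b))) (φ c) = 0 := by
    intro a b c
    have h1 := anti a b c
    have h2 := sym a c b
    have h3 := anti c a b
    have h4 := sym c b a
    have h5 := anti b c a
    have h6 := sym b a c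
    linarith
  -- key structural lemma: D (K a) b = - K (D a b)
  have hL1 : ∀ a b : V, D (φ (J a)) b = - φ (J (D a b)) := by
    intro a b
    have h0 : D (φ (J a)) b + φ (J (D a b)) = 0 := hnd' _ (fun c => Wzero a b c)
    exact eq_neg_of_add_eq_zero_left h0
  -- formula: 2 D a b = br a b + K (br (K a) b)
  have hTwo : ∀ a b : V, D a b + D a b = br a b + φ (J (br (φ (J a)) b)) := by
    intro a b
    have h1 := hDsym a b
    have h2 := hDsym (φ (J a)) b
    rw [hL1 a b, hKah b a] at h2
    -- h2 : - φ (J (D a b)) - φ (J (D b a)) = br (φ (J a)) b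
    have h3 : φ (J (br (φ (J a)) b)) = D a b + D b a := by
      rw [← h2]
      simp only [map_sub, map_neg]
      rw [hJ1, hJ1]
      module
    rw [h3]
    linear_combination (norm := module) h1
  -- expansion of D (φ a) (D b c)
  have key : ∀ a b c : V, (4:ℝ) • D (φ a) (D b c) =
      (br (φ a) (br b c) - br (φ (φ (J a))) (br (φ (J b)) c))
      + (φ (J (br (φ (φ (J a))) (br b c))) + φ (J (br (φ a) (br (φ (J b)) c)))) := by
    intro a b c
    have e1 := hTwo b c
    have s1 : (4:ℝ) • D (φ a) (D b c)
        = D (φ a) (D b c + D b c) + D (φ a) (D b c + D b c) := by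
      simp only [map_add]; module
    rw [s1, e1, map_add, hKah (φ a) (br (φ (J b)) c)]
    have f1 := hTwo (φ a) (br b c)
    have f2 := hTwo (φ a) (br (φ (J b)) c)
    rw [hcomm a] at f1 f2
    have f3 : φ (J (D (φ a) (br (φ (J b)) c))) + φ (J (D (φ a) (br (φ (J b)) c)))
        = φ (J (br (φ a) (br (φ (J b)) c))) - br (φ (φ (J a))) (br (φ (J b)) c) := by
      rw [← map_add φ, ← map_add J, f2]
      rw [map_add J, map_add φ, hJ1]
      module
    linear_combination (norm := module) f1 + f3
  -- the two bracket identities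
  intro x y z
  have G1 : br (φ x) (br y z) - br (φ (φ (J x))) (br (φ (J y)) z)
      = br (φ y) (br x z) - br (φ (φ (J y))) (br (φ (J x)) z) := by
    have j1 := hjac x y z
    have j2 := hjac (φ (J x)) (φ (J y)) z
    rw [hab x y] at j2
    rw [hskew z x, map_neg] at j1
    rw [hskew z (φ (J x)), map_neg] at j2
    linear_combination (norm := module) j1 - j2
  have G2 : br (φ (φ (J x))) (br y z) + br (φ x) (br (φ (J y)) z)
      = br (φ (φ (J y))) (br x z) + br (φ y) (br (φ (J x)) z) := by
    have j3 := hjac (φ (J x)) y z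
    have j4 := hjac x (φ (J y)) z
    rw [hskew z (φ (J x)), map_neg] at j3
    rw [hskew z x, map_neg] at j4
    have hcancel : br (φ z) (br (φ (J x)) y) = - br (φ z) (br x (φ (J y))) := by
      rw [habK x y, map_neg]
    linear_combination (norm := module) j3 + j4 - hcancel
  have G2' : φ (J (br (φ (φ (J x))) (br y z))) + φ (J (br (φ x) (br (φ (J y)) z)))
      = φ (J (br (φ (φ (J y))) (br x z))) + φ (J (br (φ y) (br (φ (J x)) z))) := by
    rw [← map_add φ, ← map_add J, ← map_add φ, ← map_add J, G2]
  have e : (4:ℝ) • D (φ x) (D y z) = (4:ℝ) • D (φ y) (D x z) := by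
    rw [key x y z, key y x z, G1, G2']
  have h4 : (4:ℝ) ≠ 0 := by norm_num
  have := congrArg (fun v : V => (4:ℝ)⁻¹ • v) e
  simpa [smul_smul, h4] using this
end

section
/- Let (g,[·,·],φ,J,⟨·,·⟩) be a Kähler-Norden Hom-Lie algebra whose complex structure J is abelian. Then the curvature K(x,y) := ∇_{φ(x)}∘∇_y − ∇_{φ(y)}∘∇_x − ∇_{[x,y]}∘φ vanishes identically. -/
private lemma pairSym_aux {V : Type*} (R : V → V → V → V → ℝ)
    (s12 : ∀ a b c d, R a b c d = -R b a c d)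
    (s34 : ∀ a b c d, R a b c d = -R a b d c)
    (bi : ∀ a b c d, R a b c d + R b c a d + R c a b d = 0) :
    ∀ a b c d, R a b c d = R c d a b := by
  intro a b c d
  linarith [bi a b c d, bi b c d a, bi c d a b, bi d a b c,
    s12 a b c d, s12 c d a b, s34 a b c d, s34 c d a b,
    s12 b c a d, s34 b c d a, s12 c a b d, s34 d b c a,
    s12 d a c b, s34 c d b a, s12 a c d b, s34 d a b c,
    s12 b d a c, s34 a b d c, s12 d b c a, s34 b c a d,
    s12 c a d b, s34 a c d b, s12 a b d c, s34 b d a c,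
    s34 d a c b, s34 c a b d, s34 b a c d,
    s12 d a b c, s12 b c d a, s12 c d b a]

theorem stmt17
    (V : Type*) [AddCommGroup V] [Module ℝ V]
    (br : V →ₗ[ℝ] V →ₗ[ℝ] V) (φ : V →ₗ[ℝ] V)
    (hskew : ∀ x y : V, br x y = - br y x)
    (hmor : ∀ x y : V, φ (br x y) = br (φ x) (φ y))
    (hjac : ∀ x y z : V, br (φ x) (br y z) + br (φ y) (br z x) + br (φ z) (br x y) = 0)
    (g : V →ₗ[ℝ] V →ₗ[ℝ] ℝ)
    (hsym : ∀ x y : V, g x y = g y x)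
    (hnd : ∀ x : V, (∀ y : V, g x y = (0:ℝ)) → x = 0)
    (hinvm : ∀ x y : V, g (φ x) (φ y) = g x y)
    (J : V ≃ₗ[ℝ] V)
    (hJ1 : ∀ x : V, φ (J (φ (J x))) = -x)
    (hJ2 : ∀ x : V, φ (J x) = J (φ x))
    (hnor : ∀ x y : V, g (φ (J x)) y = g x (φ (J y)))
    (D : V →ₗ[ℝ] V →ₗ[ℝ] V)
    (hDsym : ∀ x y : V, D x y - D y x = br x y)
    (hDmet : ∀ x y z : V, g (D x y) (φ z) = - g (φ y) (D x z))
    (hKah : ∀ x y : V, D x (φ (J y)) = φ (J (D x y)))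
    (hab : ∀ x y : V, br (φ (J x)) (φ (J y)) = br x y)
    (hanti : ∀ x y : V, D (φ (J x)) y = - φ (J (D x y)))
    (hcomm : ∀ x : V, φ (J (φ x)) = φ (φ (J x))) :
    ∀ x y z : V,
      D (φ x) (D y z) - D (φ y) (D x z) - D (br x y) (φ z) = 0 := by
  -- injectivity of P = φ ∘ J
  have injP : ∀ u v : V, φ (J u) = φ (J v) → u = v := by
    intro u v h
    have h2 := congrArg (fun t => φ (J t)) h
    simp only [hJ1] at h2
    exact neg_injective h2
  -- P (P v) inverse fact: φ (J (-(φ (J v)))) = v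
  have hPP : ∀ v : V, φ (J (-(φ (J v)))) = v := by
    intro v
    rw [map_neg, map_neg, hJ1, neg_neg]
  -- D (P u) (P v) = D u v
  have hDPP : ∀ u v : V, D (φ (J u)) (φ (J v)) = D u v := by
    intro u v
    rw [hanti, hKah, hJ1, neg_neg]
  -- expansion of D (br u v) w
  have hDbr : ∀ u v w : V, D (br u v) w = D (D u v) w - D (D v u) w := by
    intro u v w
    rw [← hDsym u v, map_sub, LinearMap.sub_apply]
  -- A1 : first Bianchi identity for the hom-curvature
  have A1 : ∀ a b c : V,
      (D (φ a) (D b c) - D (φ b) (D a c) - D (br a b) (φ c))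
      + (D (φ b) (D c a) - D (φ c) (D b a) - D (br b c) (φ a))
      + (D (φ c) (D a b) - D (φ a) (D c b) - D (br c a) (φ b)) = 0 := by
    intro a b c
    have h1 : D (br a b) (φ c) - D (φ c) (br a b) = br (br a b) (φ c) := hDsym _ _
    have h2 : D (br b c) (φ a) - D (φ a) (br b c) = br (br b c) (φ a) := hDsym _ _
    have h3 : D (br c a) (φ b) - D (φ b) (br c a) = br (br c a) (φ b) := hDsym _ _
    have e1 : D (φ c) (br a b) = D (φ c) (D a b) - D (φ c) (D b a) := by
      rw [← hDsym a b, map_sub]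
    have e2 : D (φ a) (br b c) = D (φ a) (D b c) - D (φ a) (D c b) := by
      rw [← hDsym b c, map_sub]
    have e3 : D (φ b) (br c a) = D (φ b) (D c a) - D (φ b) (D a c) := by
      rw [← hDsym c a, map_sub]
    have j1 : br (br a b) (φ c) = - br (φ c) (br a b) := hskew _ _
    have j2 : br (br b c) (φ a) = - br (φ a) (br b c) := hskew _ _
    have j3 : br (br c a) (φ b) = - br (φ b) (br c a) := hskew _ _
    linear_combination (norm := module) (-1 : ℝ) • h1 - h2 - h3 - e1 - e2 - e3
      - j1 - j2 - j3 + hjac a b c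
  -- conversion equations
  have cv1 : ∀ u v w : V, D (φ (φ (J u))) (D (φ (J v)) w) = -(D (φ u) (D v w)) := by
    intro u v w
    rw [← hcomm, hanti v w, map_neg, hDPP]
  have cv2 : ∀ u v w : V, D (φ (φ (J u))) (D v (φ (J w))) = D (φ u) (D v w) := by
    intro u v w
    rw [← hcomm, hKah v w, hDPP]
  have cv3 : ∀ u v w : V, D (φ w) (D (φ (J u)) (φ (J v))) = D (φ w) (D u v) := by
    intro u v w
    rw [hDPP]
  have cv4 : ∀ u v w : V,
      D (br (φ (J u)) v) (φ (φ (J w))) = -(D (D u v) (φ w)) - D (D v u) (φ w) := by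
    intro u v w
    have hb : br (φ (J u)) v = -(φ (J (D u v))) - φ (J (D v u)) := by
      rw [← hDsym, hanti u v, hKah v u]
    rw [hb, ← hcomm, map_sub, map_neg, LinearMap.sub_apply, LinearMap.neg_apply,
      hDPP, hDPP]
  have cv5 : ∀ u v w : V,
      D (br u (φ (J v))) (φ (φ (J w))) = D (D u v) (φ w) + D (D v u) (φ w) := by
    intro u v w
    have hb : br u (φ (J v)) = φ (J (D u v)) + φ (J (D v u)) := by
      rw [← hDsym, hKah u v, hanti v u]
      module
    rw [hb, ← hcomm, map_add, LinearMap.add_apply, hDPP, hDPP]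
  have c3eq : ∀ u v w : V, D (br (φ (J u)) (φ (J v))) (φ w) = D (br u v) (φ w) := by
    intro u v w
    rw [hab]
  -- A3 : diamond identity
  have A3 : ∀ x y z : V,
      D (φ x) (D y z) - D (φ y) (D x z) = D (D y z) (φ x) - D (D x z) (φ y) := by
    intro x y z
    have EP := A1 (φ (J x)) (φ (J y)) z
    rw [cv1 x y z, cv1 y x z, c3eq x y z, cv2 y z x, cv3 y x z, cv4 y z x,
      cv3 x y z, cv2 x z y, cv5 z x y] at EP
    linear_combination (norm := module) (-(1/2 : ℝ)) • EP + (1/2 : ℝ) • A1 x y z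
      + (1/2 : ℝ) • hDbr y z (φ x) + (1/2 : ℝ) • hDbr z x (φ y)
  -- A4 : the symmetric part of the curvature vanishes
  have A4 : ∀ x y z : V, D (φ x) (D y z) = D (φ y) (D x z) := by
    intro x y z
    have h1 := A3 x y z
    have h2 := A3 x (φ (J y)) z
    rw [hanti y z, ← hcomm y] at h2
    simp only [map_neg, LinearMap.neg_apply] at h2
    rw [hKah (φ x) (D y z), hanti (φ y) (D x z), hanti (D y z) (φ x),
      hKah (D x z) (φ y)] at h2
    have h3 : φ (J (D (φ y) (D x z) - D (φ x) (D y z)))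
        = φ (J (D (D y z) (φ x) - D (D x z) (φ y))) := by
      simp only [map_sub]
      linear_combination (norm := module) h2
    have h4 := injP _ _ h3
    have h5 : (2:ℝ) • (D (φ x) (D y z) - D (φ y) (D x z)) = 0 := by
      rw [two_smul]
      linear_combination (norm := module) h1 - h4
    have h6 : D (φ x) (D y z) - D (φ y) (D x z) = 0 := by
      rcases smul_eq_zero.mp h5 with h | h
      · norm_num at h
      · exact h
    exact sub_eq_zero.mp h6
  -- A5 : Bianchi identity for B(x,y)z = D (br x y) (φ z)
  have A5 : ∀ x y z : V,
      D (br x y) (φ z) + D (br y z) (φ x) + D (br z x) (φ y) = 0 := by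
    intro x y z
    linear_combination (norm := module) (-1 : ℝ) • A1 x y z + A4 x y z
      + A4 y z x + A4 z x y
  -- the algebraic curvature-type tensor
  set Rf : V → V → V → V → ℝ :=
    fun a b c d => g (D (br a b) (φ c)) (φ (φ d)) with hRf
  have s12 : ∀ a b c d : V, Rf a b c d = -Rf b a c d := by
    intro a b c d
    show g (D (br a b) (φ c)) (φ (φ d)) = -(g (D (br b a) (φ c)) (φ (φ d)))
    rw [hskew a b]
    simp only [map_neg, LinearMap.neg_apply]
  have s34 : ∀ a b c d : V, Rf a b c d = -Rf a b d c := by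
    intro a b c d
    show g (D (br a b) (φ c)) (φ (φ d)) = -(g (D (br a b) (φ d)) (φ (φ c)))
    rw [hDmet (br a b) (φ c) (φ d), hsym]
  have bi : ∀ a b c d : V, Rf a b c d + Rf b c a d + Rf c a b d = 0 := by
    intro a b c d
    have h := congrArg (fun t => g t (φ (φ d))) (A5 a b c)
    simpa only [map_add, LinearMap.add_apply, map_zero, LinearMap.zero_apply] using h
  have psym := pairSym_aux Rf s12 s34 bi
  have M1 : ∀ x y z w : V, Rf (φ (J x)) y z w = -Rf x (φ (J y)) z w := by
    intro x y z w
    have hb : br (φ (J x)) y = -(br x (φ (J y))) := by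
      calc br (φ (J x)) y = br (φ (J x)) (φ (J (-(φ (J y))))) := by rw [hPP]
        _ = br x (-(φ (J y))) := hab x _
        _ = -(br x (φ (J y))) := by rw [map_neg]
    show g (D (br (φ (J x)) y) (φ z)) (φ (φ w))
        = -(g (D (br x (φ (J y))) (φ z)) (φ (φ w)))
    rw [hb]
    simp only [map_neg, LinearMap.neg_apply]
  have M2 : ∀ a b c w : V, Rf a b (φ (J c)) w = Rf a b c (φ (J w)) := by
    intro a b c w
    show g (D (br a b) (φ (φ (J c)))) (φ (φ w))
        = g (D (br a b) (φ c)) (φ (φ (φ (J w))))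
    rw [← hcomm c, hKah (br a b) (φ c), hnor (D (br a b) (φ c)) (φ (φ w)),
      hcomm (φ w), hcomm w]
  have Rz1 : ∀ x y z w : V, Rf x (φ (J y)) z w = 0 := by
    intro x y z w
    have e1 : Rf (φ (J x)) y z w = Rf x (φ (J y)) z w := by
      rw [psym (φ (J x)) y z w, M2 z w x y, psym z w x (φ (J y))]
    have e2 := M1 x y z w
    linarith [e1, e2]
  have Rzero : ∀ x y z w : V, Rf x y z w = 0 := by
    intro x y z w
    have hv := hPP y
    calc Rf x y z w = Rf x (φ (J (-(φ (J y))))) z w := by rw [hv]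
      _ = 0 := Rz1 x _ z w
  have Bzero : ∀ x y z : V, D (br x y) (φ z) = 0 := by
    intro x y z
    apply hnd
    intro t
    have h1 : φ (-(J (φ (J t)))) = t := by
      rw [map_neg φ, hJ1, neg_neg]
    have h2 : φ (-(J (φ (J (-(J (φ (J t)))))))) = -(J (φ (J t))) := by
      rw [map_neg φ, hJ1, neg_neg]
    calc g (D (br x y) (φ z)) t
        = g (D (br x y) (φ z)) (φ (φ (-(J (φ (J (-(J (φ (J t)))))))))) := by
          rw [h2, h1]
      _ = 0 := Rzero x y z _
  intro x y z
  rw [A4 x y z, Bzero x y z, sub_zero, sub_self]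
end

section
/- Let (g,[·,·],φ,J,⟨·,·⟩) be a Kähler-Norden Hom-Lie algebra with curvature K(x,y)z := ∇_{φ(x)}(∇_y z) − ∇_{φ(y)}(∇_x z) − ∇_{[x,y]}(φ(z)). Then K(x,y)((φ∘J)z) = (φ∘J)(K(x,y)z) for all x, y, z ∈ g. -/
theorem stmt19
    (V : Type*) [AddCommGroup V] [Module ℝ V]
    (br : V →ₗ[ℝ] V →ₗ[ℝ] V) (φ : V →ₗ[ℝ] V)
    (hskew : ∀ x y : V, br x y = - br y x)
    (hmor : ∀ x y : V, φ (br x y) = br (φ x) (φ y))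
    (hjac : ∀ x y z : V, br (φ x) (br y z) + br (φ y) (br z x) + br (φ z) (br x y) = 0)
    (g : V →ₗ[ℝ] V →ₗ[ℝ] ℝ)
    (hsym : ∀ x y : V, g x y = g y x)
    (hnd : ∀ x : V, (∀ y : V, g x y = (0:ℝ)) → x = 0)
    (hinvm : ∀ x y : V, g (φ x) (φ y) = g x y)
    (J : V ≃ₗ[ℝ] V)
    (hJ1 : ∀ x : V, φ (J (φ (J x))) = -x)
    (hJ2 : ∀ x : V, φ (J x) = J (φ x))
    (hnor : ∀ x y : V, g (φ (J x)) y = g x (φ (J y)))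
    (D : V →ₗ[ℝ] V →ₗ[ℝ] V)
    (hDsym : ∀ x y : V, D x y - D y x = br x y)
    (hDmet : ∀ x y z : V, g (D x y) (φ z) = - g (φ y) (D x z))
    (hKah : ∀ x y : V, D x (φ (J y)) = φ (J (D x y)))
    (hcomm : ∀ x : V, φ (φ (J x)) = φ (J (φ x))) :
    ∀ x y z : V,
      D (φ x) (D y (φ (J z))) - D (φ y) (D x (φ (J z))) - D (br x y) (φ (φ (J z))) =
      φ (J (D (φ x) (D y z) - D (φ y) (D x z) - D (br x y) (φ z))) := by
  intro x y z
  rw [hKah y z, hKah (φ x), hKah x z, hKah (φ y), hcomm z, hKah (br x y)]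
  simp [map_sub]
end
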